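/- arXiv:1312.0696 — 4 statements merged into one kernel-verified Lean document; each statement's English description precedes it below -/
import Mathlib

section
/- Euler's pentagonal number theorem: 1/f(x) = ∑_{n ∈ ℤ} (-1)^n x^{n(3n-1)/2}, i.e., ∏_{m≥1} (1-x^m) = ∑_{n ∈ ℤ} (-1)^n x^{n(3n-1)/2} as formal power series. -/
open Finset

namespace Pentagonal

/-! ### Basic numeric helpers -/

lemma sum_Icc_id_mul_two (l r : ℕ) (h : l ≤ r) :
    (∑ i ∈ Icc l r, i) * 2 = (l + r) * (r + 1 - l) := by
  obtain ⟨c, rfl⟩ : ∃ c, r = l + c := ⟨r - l, by omega⟩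
  rw [← Finset.Ico_add_one_right_eq_Icc, Finset.sum_Ico_eq_sum_range]
  have h2 : l + c + 1 - l = c + 1 := by omega
  rw [h2, Finset.sum_add_distrib, Finset.sum_const, Finset.card_range, smul_eq_mul]
  have h3 := Finset.sum_range_id_mul_two (c + 1)
  have h4 : c + 1 - 1 = c := rfl
  rw [h4] at h3
  nlinarith [h3]

lemma sum_Icc_succ (l r : ℕ) (h : l ≤ r) :
    ∑ i ∈ Icc (l+1) (r+1), i = (∑ i ∈ Icc l r, i) + (r + 1 - l) := by
  have himg : Icc (l+1) (r+1) = (Icc l r).image (· + 1) := by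
    ext x
    simp only [mem_Icc, mem_image]
    constructor
    · intro hx; exact ⟨x - 1, by omega, by omega⟩
    · rintro ⟨y, hy, rfl⟩; omega
  rw [himg, Finset.sum_image (fun a _ b _ h => by simpa using h)]
  rw [Finset.sum_add_distrib, Finset.sum_const, Nat.card_Icc, smul_eq_mul, mul_one]

/-! ### min, max, staircase bottom -/

/-- maximum (junk value `0` on `∅`) -/
def mx (s : Finset ℕ) : ℕ := s.sup id

/-- minimum (junk value on `∅`) -/
noncomputable def mn (s : Finset ℕ) : ℕ := sInf {x | x ∈ s}

/-- bottom of the maximal "staircase" ending at the top -/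
noncomputable def bb (s : Finset ℕ) : ℕ := sInf {x | x ∈ s ∧ Icc x (mx s) ⊆ s}

lemma le_mx {s : Finset ℕ} {x : ℕ} (hx : x ∈ s) : x ≤ mx s := Finset.le_sup (f := id) hx

lemma mx_mem {s : Finset ℕ} (h : s.Nonempty) : mx s ∈ s := by
  obtain ⟨b, hb, he⟩ := Finset.exists_mem_eq_sup s h id
  rw [mx, he]; exact hb

lemma mx_eq {s : Finset ℕ} {m : ℕ} (h : m ∈ s) (h2 : ∀ x ∈ s, x ≤ m) : mx s = m :=
  le_antisymm (Finset.sup_le h2) (le_mx h)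

lemma mn_mem {s : Finset ℕ} (h : s.Nonempty) : mn s ∈ s := by
  have : {x | x ∈ s}.Nonempty := ⟨h.choose, h.choose_spec⟩
  exact Nat.sInf_mem this

lemma mn_le {s : Finset ℕ} {x : ℕ} (hx : x ∈ s) : mn s ≤ x := Nat.sInf_le hx

lemma mn_eq {s : Finset ℕ} {m : ℕ} (h : m ∈ s) (h2 : ∀ x ∈ s, m ≤ x) : mn s = m :=
  le_antisymm (mn_le h) (h2 _ (mn_mem ⟨m, h⟩))

lemma bb_mem_spec {s : Finset ℕ} (h : s.Nonempty) : bb s ∈ s ∧ Icc (bb s) (mx s) ⊆ s := by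
  have hmx := mx_mem h
  have : {x | x ∈ s ∧ Icc x (mx s) ⊆ s}.Nonempty :=
    ⟨mx s, hmx, by intro y hy; simp only [mem_Icc] at hy; have : y = mx s := le_antisymm hy.2 hy.1; rwa [this]⟩
  exact Nat.sInf_mem this

lemma bb_le {s : Finset ℕ} {c : ℕ} (h : c ∈ s) (h2 : Icc c (mx s) ⊆ s) : bb s ≤ c :=
  Nat.sInf_le ⟨h, h2⟩

lemma bb_eq {s : Finset ℕ} {c : ℕ} (hne : s.Nonempty) (h : c ∈ s)
    (h2 : Icc c (mx s) ⊆ s) (h3 : c - 1 ∉ s) : bb s = c := by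
  refine le_antisymm (bb_le h h2) ?_
  by_contra hc
  push_neg at hc
  obtain ⟨hbs, hbI⟩ := bb_mem_spec hne
  -- then c - 1 ∈ Icc (bb s) (mx s) ⊆ s
  have hcm : c ≤ mx s := le_mx h
  have : c - 1 ∈ Icc (bb s) (mx s) := by simp only [mem_Icc]; omega
  exact h3 (hbI this)

lemma bb_pred_not_mem {s : Finset ℕ} (hne : s.Nonempty) (h1 : ∀ x ∈ s, 1 ≤ x) :
    bb s - 1 ∉ s := by
  intro hmem
  obtain ⟨hbs, hbI⟩ := bb_mem_spec hne
  have hb1 : 1 ≤ bb s := h1 _ hbs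
  have : bb s ≤ bb s - 1 := by
    refine bb_le hmem ?_
    intro x hx
    simp only [mem_Icc] at hx
    rcases Nat.eq_or_lt_of_le hx.1 with he | hlt
    · rwa [← he]
    · exact hbI (by simp only [mem_Icc]; omega)
  omega

/-! ### Pentagonal (fixed-point) sets -/

def IsPent (s : Finset ℕ) : Prop := ∃ k : ℕ, 1 ≤ k ∧ (s = Icc k (2*k-1) ∨ s = Icc (k+1) (2*k))

lemma pent_struct {s : Finset ℕ} (h : IsPent s) :
    s.Nonempty ∧ bb s = mn s ∧ 1 ≤ mn s ∧
      (mx s = 2 * mn s - 1 ∨ mx s = 2 * mn s - 2) := by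
  obtain ⟨k, hk, hs | hs⟩ := h
  · subst hs
    have hne : (Icc k (2*k-1)).Nonempty := ⟨k, by simp only [mem_Icc]; omega⟩
    have hmn : mn (Icc k (2*k-1)) = k :=
      mn_eq (by simp only [mem_Icc]; omega) (fun x hx => by simp only [mem_Icc] at hx; omega)
    have hmx : mx (Icc k (2*k-1)) = 2*k-1 :=
      mx_eq (by simp only [mem_Icc]; omega) (fun x hx => by simp only [mem_Icc] at hx; omega)
    have hbb : bb (Icc k (2*k-1)) = k := by
      refine bb_eq hne (by simp only [mem_Icc]; omega) ?_ (by simp only [mem_Icc]; omega)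
      rw [hmx]
    refine ⟨hne, by rw [hbb, hmn], by rw [hmn]; omega, by left; rw [hmx, hmn]⟩
  · subst hs
    have hne : (Icc (k+1) (2*k)).Nonempty := ⟨k+1, by simp only [mem_Icc]; omega⟩
    have hmn : mn (Icc (k+1) (2*k)) = k+1 :=
      mn_eq (by simp only [mem_Icc]; omega) (fun x hx => by simp only [mem_Icc] at hx; omega)
    have hmx : mx (Icc (k+1) (2*k)) = 2*k :=
      mx_eq (by simp only [mem_Icc]; omega) (fun x hx => by simp only [mem_Icc] at hx; omega)
    have hbb : bb (Icc (k+1) (2*k)) = k+1 := by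
      refine bb_eq hne (by simp only [mem_Icc]; omega) ?_ (by simp only [mem_Icc]; omega)
      rw [hmx]
    refine ⟨hne, by rw [hbb, hmn], by rw [hmn]; omega, by right; rw [hmx, hmn]; omega⟩

end Pentagonal

namespace Pentagonal
open Finset

/-! ### The Franklin involution -/

noncomputable def phiA (s : Finset ℕ) : Finset ℕ :=
  ((s.filter (fun x => x ≤ mx s - mn s)).erase (mn s)) ∪ Icc (mx s - mn s + 2) (mx s + 1)

noncomputable def phiB (s : Finset ℕ) : Finset ℕ :=
  insert (mx s + 1 - bb s) ((s.filter (fun x => x < bb s)) ∪ Icc (bb s - 1) (mx s - 1))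

noncomputable def phi (s : Finset ℕ) : Finset ℕ :=
  if mn s + bb s ≤ mx s + 1 then phiA s else phiB s

lemma mem_phiA {s : Finset ℕ} {x : ℕ} :
    x ∈ phiA s ↔ (x ∈ s ∧ x ≤ mx s - mn s ∧ x ≠ mn s)
      ∨ (mx s - mn s + 2 ≤ x ∧ x ≤ mx s + 1) := by
  simp only [phiA, mem_union, mem_erase, mem_filter, mem_Icc]
  tauto

lemma mem_phiB {s : Finset ℕ} {x : ℕ} :
    x ∈ phiB s ↔ x = mx s + 1 - bb s ∨ (x ∈ s ∧ x < bb s)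
      ∨ (bb s - 1 ≤ x ∧ x ≤ mx s - 1) := by
  simp only [phiB, mem_insert, mem_union, mem_filter, mem_Icc]

lemma phiA_spec {s : Finset ℕ} (h1 : ∀ x ∈ s, 1 ≤ x) (hne : s.Nonempty)
    (hcase : mn s + bb s ≤ mx s + 1) (hpent : ¬ IsPent s) :
    (∀ x ∈ phiA s, 1 ≤ x) ∧ (∑ x ∈ phiA s, x) = (∑ x ∈ s, x) ∧ (phiA s).card + 1 = s.card ∧
    ¬ (mn (phiA s) + bb (phiA s) ≤ mx (phiA s) + 1) ∧ ¬ IsPent (phiA s) ∧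
    phiB (phiA s) = s := by
  have ha := mn_mem hne
  have hM := mx_mem hne
  obtain ⟨hb, hIb⟩ := bb_mem_spec hne
  have ha1 : 1 ≤ mn s := h1 _ ha
  have hax : ∀ x ∈ s, mn s ≤ x := fun x hx => mn_le hx
  have hxM : ∀ x ∈ s, x ≤ mx s := fun x hx => le_mx hx
  have hab : mn s ≤ bb s := hax _ hb
  have hbM : bb s ≤ mx s := hxM _ hb
  -- key: 2 * mn s ≤ mx s
  have h2a : 2 * mn s ≤ mx s := by
    by_contra hcon
    push_neg at hcon
    have hba : bb s = mn s := by omega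
    have hfull : s = Icc (mn s) (mx s) := by
      apply Finset.Subset.antisymm
      · intro x hx; simp only [mem_Icc]; exact ⟨hax x hx, hxM x hx⟩
      · rw [← hba]; exact hIb
    have hM1 : mx s = 2 * mn s - 1 := by omega
    exact hpent ⟨mn s, ha1, Or.inl (by rw [← hM1]; exact hfull)⟩
  have hIcc_sub : Icc (mx s - mn s + 1) (mx s) ⊆ s := by
    intro x hx; simp only [mem_Icc] at hx
    exact hIb (by simp only [mem_Icc]; omega)
  -- decomposition of s
  have hsplit : s = (s.filter (fun x => x ≤ mx s - mn s)) ∪ Icc (mx s - mn s + 1) (mx s) := by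
    ext x
    simp only [mem_union, mem_filter, mem_Icc]
    constructor
    · intro hx
      rcases le_or_gt x (mx s - mn s) with h | h
      · exact Or.inl ⟨hx, h⟩
      · exact Or.inr ⟨by omega, hxM x hx⟩
    · rintro (⟨hx, _⟩ | ⟨hx1, hx2⟩)
      · exact hx
      · exact hIcc_sub (by simp only [mem_Icc]; omega)
  have hdisj : Disjoint (s.filter (fun x => x ≤ mx s - mn s)) (Icc (mx s - mn s + 1) (mx s)) := by
    rw [Finset.disjoint_left]
    intro x hx hx2
    simp only [mem_filter] at hx
    simp only [mem_Icc] at hx2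
    omega
  have hdisj2 : Disjoint ((s.filter (fun x => x ≤ mx s - mn s)).erase (mn s))
      (Icc (mx s - mn s + 2) (mx s + 1)) := by
    rw [Finset.disjoint_left]
    intro x hx hx2
    simp only [mem_erase, mem_filter] at hx
    simp only [mem_Icc] at hx2
    omega
  have hamem : mn s ∈ s.filter (fun x => x ≤ mx s - mn s) := by
    simp only [mem_filter]; exact ⟨ha, by omega⟩
  -- cards
  have hcards : s.card = (s.filter (fun x => x ≤ mx s - mn s)).card + mn s := by
    conv_lhs => rw [hsplit]
    rw [Finset.card_union_of_disjoint hdisj, Nat.card_Icc]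
    omega
  have hcardA : (phiA s).card + 1 = s.card := by
    rw [phiA, Finset.card_union_of_disjoint hdisj2, Nat.card_Icc,
      Finset.card_erase_of_mem hamem, hcards]
    have : 1 ≤ (s.filter (fun x => x ≤ mx s - mn s)).card := Finset.card_pos.2 ⟨_, hamem⟩
    omega
  -- sums
  have hsums : (∑ x ∈ s, x) = (∑ x ∈ s.filter (fun x => x ≤ mx s - mn s), x)
      + (∑ x ∈ Icc (mx s - mn s + 1) (mx s), x) := by
    conv_lhs => rw [hsplit]
    exact Finset.sum_union hdisj
  have hshift : (∑ x ∈ Icc (mx s - mn s + 2) (mx s + 1), x)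
      = (∑ x ∈ Icc (mx s - mn s + 1) (mx s), x) + mn s := by
    have h := sum_Icc_succ (mx s - mn s + 1) (mx s) (by omega)
    have e1 : mx s - mn s + 1 + 1 = mx s - mn s + 2 := by omega
    have e2 : mx s + 1 - (mx s - mn s + 1) = mn s := by omega
    rw [e1, e2] at h
    exact h
  have hsumA : (∑ x ∈ phiA s, x) = (∑ x ∈ s, x) := by
    rw [phiA, Finset.sum_union hdisj2, hshift]
    have herase : (∑ x ∈ (s.filter (fun x => x ≤ mx s - mn s)).erase (mn s), x) + mn s
        = ∑ x ∈ s.filter (fun x => x ≤ mx s - mn s), x :=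
      Finset.sum_erase_add (s.filter (fun x => x ≤ mx s - mn s)) (fun x => x) hamem
    rw [hsums]
    omega
  -- structure of phiA s
  have hMA : mx s + 1 ∈ phiA s := mem_phiA.2 (Or.inr ⟨by omega, le_refl _⟩)
  have hneA : (phiA s).Nonempty := ⟨_, hMA⟩
  have hboundA : ∀ x ∈ phiA s, x ≤ mx s + 1 := by
    intro x hx
    rcases mem_phiA.1 hx with ⟨_, h', _⟩ | ⟨_, h'⟩ <;> omega
  have hmxA : mx (phiA s) = mx s + 1 := mx_eq hMA hboundA
  have hlowA : ∀ x ∈ phiA s, mn s + 1 ≤ x := by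
    intro x hx
    rcases mem_phiA.1 hx with ⟨hxs, _, hne'⟩ | ⟨h', _⟩
    · have := hax x hxs; omega
    · omega
  have hmnA : mn s + 1 ≤ mn (phiA s) := hlowA _ (mn_mem hneA)
  have hbbA : bb (phiA s) = mx s - mn s + 2 := by
    refine bb_eq hneA (mem_phiA.2 (Or.inr ⟨le_refl _, by omega⟩)) ?_ ?_
    · rw [hmxA]
      intro x hx
      simp only [mem_Icc] at hx
      exact mem_phiA.2 (Or.inr ⟨hx.1, hx.2⟩)
    · intro hcon
      rcases mem_phiA.1 hcon with ⟨_, h', _⟩ | ⟨h', _⟩ <;> omega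
  have h1A : ∀ x ∈ phiA s, 1 ≤ x := fun x hx => by have := hlowA x hx; omega
  have hcaseA : ¬ (mn (phiA s) + bb (phiA s) ≤ mx (phiA s) + 1) := by
    rw [hbbA, hmxA]; omega
  have hpentA : ¬ IsPent (phiA s) := by
    intro hp
    obtain ⟨_, hb', hm1', hor⟩ := pent_struct hp
    rw [hbbA] at hb'
    rw [hmxA, ← hb'] at hor
    omega
  refine ⟨h1A, hsumA, hcardA, hcaseA, hpentA, ?_⟩
  -- phiB (phiA s) = s
  ext x
  rw [mem_phiB, hmxA, hbbA]
  have e1 : mx s + 1 + 1 - (mx s - mn s + 2) = mn s := by omega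
  have e2 : mx s - mn s + 2 - 1 = mx s - mn s + 1 := by omega
  have e3 : mx s + 1 - 1 = mx s := by omega
  rw [e1, e2, e3]
  constructor
  · rintro (rfl | ⟨hmem, hlt⟩ | ⟨hx1, hx2⟩)
    · exact ha
    · rcases mem_phiA.1 hmem with ⟨hxs, _, _⟩ | ⟨h', _⟩
      · exact hxs
      · omega
    · exact hIcc_sub (by simp only [mem_Icc]; omega)
  · intro hx
    by_cases hxa : x = mn s
    · exact Or.inl hxa
    rcases le_or_gt x (mx s - mn s) with h | h
    · exact Or.inr (Or.inl ⟨mem_phiA.2 (Or.inl ⟨hx, h, hxa⟩), by omega⟩)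
    · exact Or.inr (Or.inr ⟨by omega, by have := hxM x hx; omega⟩)

end Pentagonal

namespace Pentagonal
open Finset

lemma phiB_spec {s : Finset ℕ} (h1 : ∀ x ∈ s, 1 ≤ x) (hne : s.Nonempty)
    (hcase : ¬ (mn s + bb s ≤ mx s + 1)) (hpent : ¬ IsPent s) :
    (∀ x ∈ phiB s, 1 ≤ x) ∧ (∑ x ∈ phiB s, x) = (∑ x ∈ s, x) ∧ (phiB s).card = s.card + 1 ∧
    (mn (phiB s) + bb (phiB s) ≤ mx (phiB s) + 1) ∧ ¬ IsPent (phiB s) ∧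
    phiA (phiB s) = s := by
  push_neg at hcase
  have ha := mn_mem hne
  have hM := mx_mem hne
  obtain ⟨hb, hIb⟩ := bb_mem_spec hne
  have ha1 : 1 ≤ mn s := h1 _ ha
  have hax : ∀ x ∈ s, mn s ≤ x := fun x hx => mn_le hx
  have hxM : ∀ x ∈ s, x ≤ mx s := fun x hx => le_mx hx
  have hab : mn s ≤ bb s := hax _ hb
  have hbM : bb s ≤ mx s := hxM _ hb
  have hbp : bb s - 1 ∉ s := bb_pred_not_mem hne h1
  -- key: mx s + 3 ≤ 2 * bb s, i.e. σ ≤ bb s - 2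
  have hσb : mx s + 3 ≤ 2 * bb s := by
    rcases Nat.eq_or_lt_of_le hab with heq | hlt
    · -- full staircase
      have hfull : s = Icc (mn s) (mx s) := by
        apply Finset.Subset.antisymm
        · intro x hx; simp only [mem_Icc]; exact ⟨hax x hx, hxM x hx⟩
        · rw [heq]; exact hIb
      have hnp : mx s ≠ 2 * mn s - 2 := by
        intro hcon
        have hm2 : 2 ≤ mn s := by omega
        refine hpent ⟨mn s - 1, by omega, Or.inr ?_⟩
        have e1 : mn s - 1 + 1 = mn s := by omega
        have e2 : 2 * (mn s - 1) = 2 * mn s - 2 := by omega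
        rw [e1, e2, ← hcon]
        exact hfull
      omega
    · -- mn s ≤ bb s - 2 since bb s - 1 ∉ s
      have : mn s ≠ bb s - 1 := fun h => hbp (h ▸ ha)
      omega
  have hσ1 : 1 ≤ mx s + 1 - bb s := by omega
  have hσmn : mx s + 1 - bb s < mn s := by omega
  have hlow2 : ∀ x ∈ s, x < bb s → x ≤ bb s - 2 := by
    intro x hx hlt
    have : x ≠ bb s - 1 := fun h => hbp (h ▸ hx)
    omega
  -- decomposition of s
  have hsplit : s = (s.filter (fun x => x < bb s)) ∪ Icc (bb s) (mx s) := by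
    ext x
    simp only [mem_union, mem_filter, mem_Icc]
    constructor
    · intro hx
      rcases lt_or_ge x (bb s) with h | h
      · exact Or.inl ⟨hx, h⟩
      · exact Or.inr ⟨h, hxM x hx⟩
    · rintro (⟨hx, _⟩ | ⟨hx1, hx2⟩)
      · exact hx
      · exact hIb (by simp only [mem_Icc]; omega)
  have hdisj : Disjoint (s.filter (fun x => x < bb s)) (Icc (bb s) (mx s)) := by
    rw [Finset.disjoint_left]
    intro x hx hx2
    simp only [mem_filter] at hx
    simp only [mem_Icc] at hx2
    omega
  have hdisj2 : Disjoint (s.filter (fun x => x < bb s)) (Icc (bb s - 1) (mx s - 1)) := by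
    rw [Finset.disjoint_left]
    intro x hx hx2
    simp only [mem_filter] at hx
    simp only [mem_Icc] at hx2
    have := hlow2 x hx.1 hx.2
    omega
  have hσnot : mx s + 1 - bb s ∉ (s.filter (fun x => x < bb s)) ∪ Icc (bb s - 1) (mx s - 1) := by
    intro hmem
    rcases Finset.mem_union.1 hmem with h' | h'
    · have := hax _ (Finset.mem_filter.1 h').1
      omega
    · have := Finset.mem_Icc.1 h'
      omega
  -- cards
  have hcards : s.card = (s.filter (fun x => x < bb s)).card + (mx s + 1 - bb s) := by
    conv_lhs => rw [hsplit]
    rw [Finset.card_union_of_disjoint hdisj, Nat.card_Icc]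
  have hcardB : (phiB s).card = s.card + 1 := by
    rw [phiB, Finset.card_insert_of_notMem hσnot, Finset.card_union_of_disjoint hdisj2,
      Nat.card_Icc, hcards]
    omega
  -- sums
  have hsums : (∑ x ∈ s, x) = (∑ x ∈ s.filter (fun x => x < bb s), x)
      + (∑ x ∈ Icc (bb s) (mx s), x) := by
    conv_lhs => rw [hsplit]
    exact Finset.sum_union hdisj
  have hshift : (∑ x ∈ Icc (bb s) (mx s), x)
      = (∑ x ∈ Icc (bb s - 1) (mx s - 1), x) + (mx s + 1 - bb s) := by
    have h := sum_Icc_succ (bb s - 1) (mx s - 1) (by omega)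
    have e1 : bb s - 1 + 1 = bb s := by omega
    have e2 : mx s - 1 + 1 = mx s := by omega
    have e3 : mx s - (bb s - 1) = mx s + 1 - bb s := by omega
    rw [e1, e2, e3] at h
    exact h
  have hsumB : (∑ x ∈ phiB s, x) = (∑ x ∈ s, x) := by
    rw [phiB, Finset.sum_insert hσnot, Finset.sum_union hdisj2, hsums, hshift]
    omega
  -- structure
  have hmem_mx : mx s - 1 ∈ phiB s := mem_phiB.2 (Or.inr (Or.inr ⟨by omega, le_refl _⟩))
  have hneB : (phiB s).Nonempty := ⟨_, hmem_mx⟩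
  have hmxB : mx (phiB s) = mx s - 1 := by
    refine mx_eq hmem_mx ?_
    intro x hx
    rcases mem_phiB.1 hx with h' | ⟨hxs, hlt⟩ | ⟨_, h'⟩
    · omega
    · have := hlow2 x hxs hlt; omega
    · omega
  have hmnB : mn (phiB s) = mx s + 1 - bb s := by
    refine mn_eq (mem_phiB.2 (Or.inl rfl)) ?_
    intro x hx
    rcases mem_phiB.1 hx with h' | ⟨hxs, _⟩ | ⟨h', _⟩
    · omega
    · have := hax x hxs; omega
    · omega
  have h1B : ∀ x ∈ phiB s, 1 ≤ x := by
    intro x hx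
    rcases mem_phiB.1 hx with h' | ⟨hxs, _⟩ | ⟨h', _⟩
    · omega
    · exact h1 x hxs
    · omega
  have hbbB : bb (phiB s) ≤ bb s - 1 := by
    refine bb_le (mem_phiB.2 (Or.inr (Or.inr ⟨le_refl _, by omega⟩))) ?_
    rw [hmxB]
    intro x hx
    simp only [mem_Icc] at hx
    exact mem_phiB.2 (Or.inr (Or.inr ⟨hx.1, hx.2⟩))
  have hcaseB : mn (phiB s) + bb (phiB s) ≤ mx (phiB s) + 1 := by
    rw [hmnB, hmxB]
    omega
  have hpentB : ¬ IsPent (phiB s) := by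
    intro hp
    obtain ⟨_, hb', hm1', hor⟩ := pent_struct hp
    rw [hmnB] at hb' hor
    rw [hmxB] at hor
    -- σ + 1 ∈ phiB s
    have hsub := (bb_mem_spec hneB).2
    rw [hb', hmxB] at hsub
    have hmem1 : mx s + 1 - bb s + 1 ∈ phiB s := by
      apply hsub
      simp only [mem_Icc]
      omega
    rcases mem_phiB.1 hmem1 with h' | ⟨hxs, hlt⟩ | ⟨h', _⟩
    · omega
    · have := hax _ hxs
      -- mn s = σ + 1
      omega
    · omega
  refine ⟨h1B, hsumB, hcardB, hcaseB, hpentB, ?_⟩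
  -- phiA (phiB s) = s
  ext x
  rw [mem_phiA, hmxB, hmnB]
  have e1 : mx s - 1 - (mx s + 1 - bb s) = bb s - 2 := by omega
  have e2 : bb s - 2 + 2 = bb s := by omega
  have e3 : mx s - 1 + 1 = mx s := by omega
  rw [e1, e2, e3]
  constructor
  · rintro (⟨hmem, hle, hne'⟩ | ⟨hx1, hx2⟩)
    · rcases mem_phiB.1 hmem with h' | ⟨hxs, _⟩ | ⟨h', _⟩
      · exact absurd h' hne'
      · exact hxs
      · omega
    · exact hIb (by simp only [mem_Icc]; omega)
  · intro hx
    rcases lt_or_ge x (bb s) with h | h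
    · refine Or.inl ⟨mem_phiB.2 (Or.inr (Or.inl ⟨hx, h⟩)), hlow2 x hx h, ?_⟩
      have := hax x hx
      omega
    · exact Or.inr ⟨h, hxM x hx⟩

end Pentagonal

namespace Pentagonal
open Finset

attribute [local instance] Classical.propDecidable

/-- The set of partitions of `n` into distinct parts. -/
def Pn (n : ℕ) : Finset (Finset ℕ) :=
  (Icc 1 (n+1)).powerset.filter (fun s => (∑ x ∈ s, x) = n)

lemma mem_Pn {n : ℕ} {s : Finset ℕ} :
    s ∈ Pn n ↔ s ⊆ Icc 1 (n+1) ∧ (∑ x ∈ s, x) = n := by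
  simp [Pn, mem_filter, mem_powerset]

lemma phi_good {n : ℕ} (hn : 1 ≤ n) {s : Finset ℕ}
    (hsP : s ∈ Pn n) (hpent : ¬ IsPent s) :
    (phi s ∈ Pn n ∧ ¬ IsPent (phi s)) ∧ phi (phi s) = s ∧
    ((phi s).card + 1 = s.card ∨ s.card + 1 = (phi s).card) := by
  obtain ⟨hsub, hsum⟩ := mem_Pn.1 hsP
  have h1 : ∀ x ∈ s, 1 ≤ x := fun x hx => (mem_Icc.1 (hsub hx)).1
  have hne : s.Nonempty := by
    rcases s.eq_empty_or_nonempty with rfl | h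
    · simp at hsum; omega
    · exact h
  have mem_aux : ∀ t : Finset ℕ, (∀ x ∈ t, 1 ≤ x) → (∑ x ∈ t, x) = n → t ∈ Pn n := by
    intro t ht1 htsum
    refine mem_Pn.2 ⟨?_, htsum⟩
    intro x hx
    simp only [mem_Icc]
    refine ⟨ht1 x hx, ?_⟩
    have : x ≤ ∑ y ∈ t, y := by
      have := Finset.single_le_sum (f := fun y : ℕ => y) (fun i _ => Nat.zero_le i) hx
      simpa using this
    omega
  by_cases h : mn s + bb s ≤ mx s + 1
  · obtain ⟨g1, gsum, gcard, gcase, gpent, ginv⟩ := phiA_spec h1 hne h hpent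
    have hphi : phi s = phiA s := if_pos h
    have hphi2 : phi (phiA s) = phiB (phiA s) := if_neg gcase
    rw [hphi, hphi2, ginv]
    exact ⟨⟨mem_aux _ g1 (by rw [gsum, hsum]), gpent⟩, rfl, Or.inl gcard⟩
  · obtain ⟨g1, gsum, gcard, gcase, gpent, ginv⟩ := phiB_spec h1 hne h hpent
    have hphi : phi s = phiB s := if_neg h
    have hphi2 : phi (phiB s) = phiA (phiB s) := if_pos gcase
    rw [hphi, hphi2, ginv]
    exact ⟨⟨mem_aux _ g1 (by rw [gsum, hsum]), gpent⟩, rfl, Or.inr gcard.symm⟩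

lemma sum_cancel {n : ℕ} (hn : 1 ≤ n) :
    ∑ s ∈ (Pn n).filter (fun t => ¬ IsPent t), (-1:ℚ)^s.card = 0 := by
  refine Finset.sum_involution (fun s _ => phi s) ?_ ?_ ?_ ?_
  · intro s hs
    simp only [mem_filter] at hs
    obtain ⟨_, _, hcard⟩ := phi_good hn hs.1 hs.2
    rcases hcard with h' | h'
    · rw [← h', pow_succ]; ring
    · rw [← h', pow_succ]; ring
  · intro s hs _
    simp only [mem_filter] at hs
    obtain ⟨_, _, hcard⟩ := phi_good hn hs.1 hs.2
    intro heq
    have heq' : phi s = s := heq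
    rw [heq'] at hcard
    omega
  · intro s hs
    simp only [mem_filter] at hs ⊢
    obtain ⟨hmem, _, _⟩ := phi_good hn hs.1 hs.2
    exact hmem
  · intro s hs
    simp only [mem_filter] at hs
    exact (phi_good hn hs.1 hs.2).2.1

lemma sum_fixed {n : ℕ} (hn : 1 ≤ n) :
    ∑ s ∈ (Pn n).filter IsPent, (-1:ℚ)^s.card
      = ∑ j ∈ (Icc (-(n:ℤ)) (n:ℤ)).filter (fun j => j * (3*j-1) = 2*(n:ℤ)), (-1:ℚ)^j := by
  have hIcc1 : ∀ k : ℕ, 1 ≤ k → mn (Icc k (2*k-1)) = k := fun k hk =>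
    mn_eq (by simp only [mem_Icc]; omega) (fun x hx => by simp only [mem_Icc] at hx; omega)
  have hIcc2 : ∀ k : ℕ, 1 ≤ k → mx (Icc k (2*k-1)) = 2*k-1 := fun k hk =>
    mx_eq (by simp only [mem_Icc]; omega) (fun x hx => by simp only [mem_Icc] at hx; omega)
  have hIcc3 : ∀ k : ℕ, 1 ≤ k → mn (Icc (k+1) (2*k)) = k+1 := fun k hk =>
    mn_eq (by simp only [mem_Icc]; omega) (fun x hx => by simp only [mem_Icc] at hx; omega)
  have hIcc4 : ∀ k : ℕ, 1 ≤ k → mx (Icc (k+1) (2*k)) = 2*k := fun k hk =>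
    mx_eq (by simp only [mem_Icc]; omega) (fun x hx => by simp only [mem_Icc] at hx; omega)
  refine Finset.sum_nbij'
    (i := fun s => if mx s = 2 * mn s - 1 then (mn s : ℤ) else 1 - (mn s : ℤ))
    (j := fun j => if 0 < j then Icc j.toNat (2*j.toNat - 1)
      else Icc ((-j).toNat + 1) (2*(-j).toNat)) ?_ ?_ ?_ ?_ ?_
  · -- maps into the j-set
    intro s hs
    simp only [mem_filter] at hs
    obtain ⟨hsP, k, hk1, hcase | hcase⟩ := hs
    · subst hcase
      obtain ⟨_, hsum⟩ := mem_Pn.1 hsP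
      have h2 := sum_Icc_id_mul_two k (2*k-1) (by omega)
      have e1 : 2*k-1+1-k = k := by omega
      have e5 : k + (2*k-1) = 3*k - 1 := by omega
      rw [hsum, e1, e5] at h2
      -- h2 : n * 2 = (3*k-1) * k
      rw [hIcc1 k hk1, hIcc2 k hk1, if_pos rfl]
      simp only [mem_filter, mem_Icc]
      have hzn : (2:ℤ) * n = (3*(k:ℤ) - 1) * k := by
        have := congrArg (Nat.cast : ℕ → ℤ) h2
        push_cast [Nat.cast_sub (show 1 ≤ 3*k by omega)] at this
        linarith [this]
      have hkn : k ≤ n := by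
        have h3 : 2 ≤ 3*k - 1 := by omega
        have h4 := Nat.mul_le_mul_right k h3
        linarith [h2, h4]
      refine ⟨⟨?_, ?_⟩, ?_⟩
      · omega
      · exact_mod_cast hkn
      · linear_combination -hzn
    · subst hcase
      obtain ⟨_, hsum⟩ := mem_Pn.1 hsP
      have h2 := sum_Icc_id_mul_two (k+1) (2*k) (by omega)
      have e1 : 2*k+1-(k+1) = k := by omega
      have e5 : (k+1) + 2*k = 3*k + 1 := by omega
      rw [hsum, e1, e5] at h2
      -- h2 : n * 2 = (3*k+1) * k
      rw [hIcc3 k hk1, hIcc4 k hk1]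
      rw [if_neg (by omega)]
      simp only [mem_filter, mem_Icc]
      have hzn : (2:ℤ) * n = (3*(k:ℤ) + 1) * k := by
        have := congrArg (Nat.cast : ℕ → ℤ) h2
        push_cast at this
        linarith [this]
      have hkn : k ≤ n := by
        have h3 : 2 ≤ 3*k + 1 := by omega
        have h4 := Nat.mul_le_mul_right k h3
        linarith [h2, h4]
      have hkz : (k:ℤ) ≤ n := by exact_mod_cast hkn
      refine ⟨⟨?_, ?_⟩, ?_⟩
      · push_cast; omega
      · push_cast; omega
      · push_cast
        linear_combination -hzn
  · -- maps back
    intro j hj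
    simp only [mem_filter, mem_Icc] at hj
    obtain ⟨⟨hj1, hj2⟩, hcond⟩ := hj
    have hj0 : j ≠ 0 := by
      intro h; rw [h] at hcond
      simp at hcond; omega
    rcases lt_or_gt_of_ne hj0 with hneg | hpos
    · -- j < 0
      set k : ℕ := (-j).toNat with hk
      have hkj : ((k:ℤ)) = -j := Int.toNat_of_nonneg (by omega)
      have hk1 : 1 ≤ k := by omega
      rw [if_neg (by omega)]
      have hnat : k*(3*k+1) = 2*n := by
        have : ((k*(3*k+1) : ℕ) : ℤ) = 2*(n:ℤ) := by
          push_cast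
          rw [hkj]
          ring_nf
          ring_nf at hcond
          linarith [hcond]
        exact_mod_cast this
      have hsum : (∑ x ∈ Icc (k+1) (2*k), x) = n := by
        have h2 := sum_Icc_id_mul_two (k+1) (2*k) (by omega)
        have e1 : 2*k+1-(k+1) = k := by omega
        rw [e1] at h2
        have e2 : (k+1+2*k) * k = k*(3*k+1) := by ring
        rw [e2, hnat] at h2
        omega
      have hkn : 2*k ≤ n := by
        have h3 : 4 ≤ 3*k+1 := by omega
        have h4 := Nat.mul_le_mul_left k h3
        omega
      simp only [mem_filter]
      refine ⟨mem_Pn.2 ⟨?_, hsum⟩, ⟨k, hk1, Or.inr rfl⟩⟩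
      intro x hx
      simp only [mem_Icc] at hx ⊢
      omega
    · -- j > 0
      set k : ℕ := j.toNat with hk
      have hkj : ((k:ℤ)) = j := Int.toNat_of_nonneg (by omega)
      have hk1 : 1 ≤ k := by omega
      rw [if_pos (by omega)]
      have hnat : k*(3*k-1) = 2*n := by
        have : ((k*(3*k-1) : ℕ) : ℤ) = 2*(n:ℤ) := by
          push_cast [show (1:ℕ) ≤ 3*k by omega]
          rw [hkj]
          ring_nf
          ring_nf at hcond
          linarith [hcond]
        exact_mod_cast this
      have hsum : (∑ x ∈ Icc k (2*k-1), x) = n := by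
        have h2 := sum_Icc_id_mul_two k (2*k-1) (by omega)
        have e1 : 2*k-1+1-k = k := by omega
        rw [e1] at h2
        have e2 : (k+(2*k-1)) * k = k*(3*k-1) := by
          have : k+(2*k-1) = 3*k-1 := by omega
          rw [this]; ring
        rw [e2, hnat] at h2
        omega
      have hkn : 2*k - 1 ≤ n := by
        rcases Nat.eq_or_lt_of_le hk1 with h' | h'
        · omega
        · have h3 : 4 ≤ 3*k-1 := by omega
          have h4 := Nat.mul_le_mul_left k h3
          omega
      simp only [mem_filter]
      refine ⟨mem_Pn.2 ⟨?_, hsum⟩, ⟨k, hk1, Or.inl rfl⟩⟩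
      intro x hx
      simp only [mem_Icc] at hx ⊢
      omega
  · -- left inverse
    intro s hs
    simp only [mem_filter] at hs
    obtain ⟨hsP, k, hk1, hcase | hcase⟩ := hs
    · subst hcase
      rw [hIcc1 k hk1, hIcc2 k hk1, if_pos rfl, if_pos (by exact_mod_cast hk1), Int.toNat_natCast]
    · subst hcase
      rw [hIcc3 k hk1, hIcc4 k hk1, if_neg (by omega)]
      have e1 : (1:ℤ) - ((k:ℤ)+1) = -(k:ℤ) := by ring
      have e2 : (1:ℤ) - (((k+1:ℕ)):ℤ) = -(k:ℤ) := by push_cast; ring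
      rw [e2, if_neg (by omega)]
      have e3 : (-(-(k:ℤ))).toNat = k := by omega
      rw [e3]
  · -- right inverse
    intro j hj
    simp only [mem_filter, mem_Icc] at hj
    obtain ⟨⟨hj1, hj2⟩, hcond⟩ := hj
    have hj0 : j ≠ 0 := by
      intro h; rw [h] at hcond; simp at hcond; omega
    rcases lt_or_gt_of_ne hj0 with hneg | hpos
    · set k : ℕ := (-j).toNat with hk
      have hkj : ((k:ℤ)) = -j := Int.toNat_of_nonneg (by omega)
      have hk1 : 1 ≤ k := by omega
      rw [if_neg (show ¬ (0:ℤ) < j by omega), hIcc3 k hk1, hIcc4 k hk1,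
        if_neg (show ¬ (2*k = 2*(k+1) - 1) by omega)]
      push_cast
      omega
    · set k : ℕ := j.toNat with hk
      have hkj : ((k:ℤ)) = j := Int.toNat_of_nonneg (by omega)
      have hk1 : 1 ≤ k := by omega
      rw [if_pos (show (0:ℤ) < j from hpos), hIcc1 k hk1, hIcc2 k hk1, if_pos rfl]
      omega
  · -- values agree
    intro s hs
    simp only [mem_filter] at hs
    obtain ⟨hsP, k, hk1, hcase | hcase⟩ := hs
    · subst hcase
      rw [hIcc1 k hk1, hIcc2 k hk1, if_pos rfl]
      have hcard : (Icc k (2*k-1)).card = k := by rw [Nat.card_Icc]; omega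
      rw [hcard, zpow_natCast]
    · subst hcase
      rw [hIcc3 k hk1, hIcc4 k hk1, if_neg (by omega)]
      have hcard : (Icc (k+1) (2*k)).card = k := by rw [Nat.card_Icc]; omega
      rw [hcard]
      have e2 : (1:ℤ) - (((k+1:ℕ)):ℤ) = -(k:ℤ) := by push_cast; ring
      rw [e2, zpow_neg, zpow_natCast]
      have hmul : ((-1:ℚ)^k) * ((-1:ℚ)^k) = 1 := by
        rw [← pow_add]
        exact Even.neg_one_pow ⟨k, by ring⟩
      exact (inv_eq_of_mul_eq_one_right hmul).symm ▸ (inv_eq_of_mul_eq_one_right hmul)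

end Pentagonal

namespace Pentagonal
open Finset

attribute [local instance] Classical.propDecidable

theorem franklin (n : ℕ) (hn : 1 ≤ n) :
    ∑ s ∈ (Icc 1 (n+1)).powerset, ((-1:ℚ)^s.card * (if n = ∑ x ∈ s, x then 1 else 0))
      = ∑ j ∈ Icc (-(n:ℤ)) (n:ℤ), if j * (3*j-1) = 2*(n:ℤ) then (-1:ℚ)^j else 0 := by
  have hL : ∑ s ∈ (Icc 1 (n+1)).powerset, ((-1:ℚ)^s.card * (if n = ∑ x ∈ s, x then 1 else 0))
      = ∑ s ∈ Pn n, (-1:ℚ)^s.card := by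
    rw [Pn, Finset.sum_filter]
    apply Finset.sum_congr rfl
    intro s _
    by_cases h : (∑ x ∈ s, x) = n
    · rw [if_pos h, if_pos h.symm, mul_one]
    · rw [if_neg h, if_neg (fun hh => h hh.symm), mul_zero]
  rw [hL]
  have hsplit := Finset.sum_filter_add_sum_filter_not (Pn n) IsPent (fun s => (-1:ℚ)^s.card)
  rw [← hsplit, sum_cancel hn, add_zero, sum_fixed hn, Finset.sum_filter]

end Pentagonal

namespace Pentagonal

theorem coeff_prod (n : ℕ) :
    (PowerSeries.coeff n)
      (∏ m ∈ Finset.range (n + 1), (1 - PowerSeries.X ^ (m + 1) : PowerSeries ℚ))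
      = ∑ t ∈ (range (n+1)).powerset, ((-1:ℚ)^t.card * (if n = ∑ i ∈ t, (i+1) then 1 else 0)) := by
  rw [Finset.prod_sub (fun _ => (1 : PowerSeries ℚ)) (fun m => PowerSeries.X ^ (m+1))]
  rw [map_sum]
  refine Finset.sum_congr rfl fun t ht => ?_
  rw [Finset.prod_const_one, mul_one, Finset.prod_pow_eq_pow_sum]
  have : ((-1 : PowerSeries ℚ) ^ t.card) = PowerSeries.C ((-1:ℚ)^t.card) := by
    rw [map_pow, map_neg, map_one]
  rw [this, PowerSeries.coeff_C_mul, PowerSeries.coeff_X_pow]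

theorem reindex (n : ℕ) :
    ∑ t ∈ (range (n+1)).powerset, ((-1:ℚ)^t.card * (if n = ∑ i ∈ t, (i+1) then 1 else 0))
      = ∑ s ∈ (Icc 1 (n+1)).powerset, ((-1:ℚ)^s.card * (if n = ∑ x ∈ s, x then 1 else 0)) := by
  refine Finset.sum_nbij' (fun t => t.image (· + 1)) (fun s => s.image (· - 1)) ?_ ?_ ?_ ?_ ?_
  · intro t ht
    simp only [mem_powerset] at *
    intro x hx
    obtain ⟨y, hy, rfl⟩ := Finset.mem_image.1 hx
    have := ht hy
    simp only [Finset.mem_range] at this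
    simp only [Finset.mem_Icc]; omega
  · intro s hs
    simp only [mem_powerset] at *
    intro x hx
    obtain ⟨y, hy, rfl⟩ := Finset.mem_image.1 hx
    have := hs hy
    simp only [Finset.mem_Icc] at this
    simp only [Finset.mem_range]; omega
  · intro t ht
    ext x
    simp only [Finset.mem_image]
    constructor
    · rintro ⟨y, ⟨z, hz, rfl⟩, rfl⟩; simpa using hz
    · intro hx; exact ⟨x+1, ⟨x, hx, rfl⟩, by omega⟩
  · intro s hs
    simp only [mem_powerset] at hs
    ext x
    simp only [Finset.mem_image]
    constructor
    · rintro ⟨y, ⟨z, hz, rfl⟩, rfl⟩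
      have := hs hz; simp only [Finset.mem_Icc] at this
      have : z - 1 + 1 = z := by omega
      rwa [this]
    · intro hx
      have := hs hx; simp only [Finset.mem_Icc] at this
      exact ⟨x-1, ⟨x, hx, rfl⟩, by omega⟩
  · intro t ht
    have hinj : Set.InjOn (· + 1) t := fun a _ b _ h => by simpa using h
    rw [Finset.card_image_of_injOn hinj, Finset.sum_image (fun a ha b hb h => by simpa using h)]

end Pentagonal

/-- Euler's pentagonal number theorem:
`∏_{m≥1} (1 - x^m) = ∑_{j ∈ ℤ} (-1)^j x^{j(3j-1)/2}`, stated coefficientwise. -/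
theorem pentagonal_number_theorem (n : ℕ) :
    (PowerSeries.coeff n)
      (∏ m ∈ Finset.range (n + 1), (1 - PowerSeries.X ^ (m + 1) : PowerSeries ℚ))
      = ∑ j ∈ Finset.Icc (-(n : ℤ)) (n : ℤ),
          if j * (3 * j - 1) = 2 * (n : ℤ) then (-1 : ℚ) ^ j else 0 := by
  rcases Nat.eq_zero_or_pos n with rfl | hn
  · simp only [Nat.cast_zero, neg_zero, Finset.Icc_self, Finset.sum_singleton]
    norm_num [PowerSeries.coeff_zero_eq_constantCoeff, map_prod]
  · rw [Pentagonal.coeff_prod, Pentagonal.reindex, Pentagonal.franklin n hn]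
end

section
/- For every integer r ≥ 1, ∏_{m≥1} (1+x^m)/(1-x^{2^r m}) = ∏_{m≥1} [ (1-x^{2^{r-1} m})^{-1} · ∏_{λ=1}^{2^{r-1}-1} (1+x^{2^{r-1} m + λ - 2^{r-1}}) ], equivalently, f_r(x) equals the generating function for partitions in which parts not divisible by 2^{r-1} are distinct. -/
open PowerSeries

namespace FrAux

noncomputable section

variable {α : Type*}

open Finset

open scoped Classical

/-- A convenience constructor for the power series whose coefficients indicate a subset.
(Adapted from Archive/Wiedijk100Theorems/Partition.lean.) -/
def indicatorSeries (α : Type*) [Semiring α] (s : Set ℕ) : PowerSeries α :=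
  PowerSeries.mk fun n => if n ∈ s then 1 else 0

theorem coeff_indicator (s : Set ℕ) [Semiring α] (n : ℕ) :
    coeff (R := α) n (indicatorSeries _ s) = if n ∈ s then 1 else 0 :=
  coeff_mk _ _

theorem constantCoeff_indicator (s : Set ℕ) [Semiring α] :
    constantCoeff (R := α) (indicatorSeries _ s) = if 0 ∈ s then 1 else 0 :=
  rfl

theorem two_series (i : ℕ) [Semiring α] :
    1 + (X : PowerSeries α) ^ i.succ = indicatorSeries α {0, i.succ} := by
  ext n
  simp only [coeff_indicator, coeff_one, coeff_X_pow, Set.mem_insert_iff, Set.mem_singleton_iff,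
    map_add]
  cases' n with d
  · simp [(Nat.succ_ne_zero i).symm]
  · simp [Nat.succ_ne_zero d]

theorem num_series' [Field α] (i : ℕ) :
    (1 - (X : PowerSeries α) ^ (i + 1))⁻¹ = indicatorSeries α {k | i + 1 ∣ k} := by
  rw [PowerSeries.inv_eq_iff_mul_eq_one]
  · ext n
    cases n with
    | zero => simp [mul_sub, zero_pow, constantCoeff_indicator]
    | succ n =>
      simp only [coeff_one, if_false, mul_sub, mul_one, coeff_indicator,
        LinearMap.map_sub, reduceCtorEq]
      simp_rw [coeff_mul, coeff_X_pow, coeff_indicator, @boole_mul _ _ _ _]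
      erw [@sum_ite _ _ _ _ _ (fun _ => Classical.propDecidable _), sum_ite]
      simp_rw [@filter_filter _ _ _ _ _, sum_const_zero, add_zero, sum_const, nsmul_eq_mul, mul_one,
        sub_eq_iff_eq_add, zero_add]
      symm
      split_ifs with h
      · suffices #{a ∈ antidiagonal (n + 1) | i + 1 ∣ a.fst ∧ a.snd = i + 1} = 1 by
          simp only [Set.mem_setOf_eq]; convert congr_arg ((↑) : ℕ → α) this; norm_cast
        rw [card_eq_one]
        cases' h with p hp
        refine ⟨((i + 1) * (p - 1), i + 1), ?_⟩
        ext ⟨a₁, a₂⟩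
        simp only [mem_filter, Prod.mk.injEq, HasAntidiagonal.mem_antidiagonal, mem_singleton]
        constructor
        · rintro ⟨a_left, ⟨a, rfl⟩, rfl⟩
          refine ⟨?_, rfl⟩
          rw [Nat.mul_sub_left_distrib, ← hp, ← a_left, mul_one, Nat.add_sub_cancel]
        · rintro ⟨rfl, rfl⟩
          match p with
          | 0 => rw [mul_zero] at hp; cases hp
          | p + 1 => rw [hp]; simp [mul_add]
      · suffices #{a ∈ antidiagonal (n + 1) | i + 1 ∣ a.fst ∧ a.snd = i + 1} = 0 by
          simp only [Set.mem_setOf_eq]; convert congr_arg ((↑) : ℕ → α) this; norm_cast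
        rw [card_eq_zero]
        apply eq_empty_of_forall_notMem
        simp only [Prod.forall, mem_filter, not_and, HasAntidiagonal.mem_antidiagonal]
        rintro _ h₁ h₂ ⟨a, rfl⟩ rfl
        apply h
        simp [← h₂]
  · simp [zero_pow]

-- The main workhorse (from Archive/Wiedijk100Theorems/Partition.lean).
theorem partialGF_prop (α : Type*) [CommSemiring α] (n : ℕ) (s : Finset ℕ) (hs : ∀ i ∈ s, 0 < i)
    (c : ℕ → Set ℕ) (hc : ∀ i, i ∉ s → 0 ∈ c i) :
    #{p : n.Partition | (∀ j, p.parts.count j ∈ c j) ∧ ∀ j ∈ p.parts, j ∈ s} =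
      coeff (R := α) n (∏ i ∈ s, indicatorSeries α ((· * i) '' c i)) := by
  simp_rw [coeff_prod, coeff_indicator, prod_boole, sum_boole]
  apply congr_arg
  simp only [mem_univ, forall_true_left, not_and, not_forall, exists_prop,
    Set.mem_image, not_exists]
  set φ : (a : Nat.Partition n) →
    a ∈ filter (fun p ↦ (∀ (j : ℕ), Multiset.count j p.parts ∈ c j) ∧ ∀ j ∈ p.parts, j ∈ s) univ →
    ℕ →₀ ℕ := fun p _ => {
      toFun := fun i => Multiset.count i p.parts • i
      support := Finset.filter (fun i => i ≠ 0) p.parts.toFinset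
      mem_support_toFun := fun a => by
        simp only [smul_eq_mul, ne_eq, mul_eq_zero, Multiset.count_eq_zero]
        rw [not_or, not_not]
        simp only [Multiset.mem_toFinset, not_not, mem_filter] }
  refine Finset.card_bij φ ?_ ?_ ?_
  · intro a ha
    simp only [φ, not_forall, not_exists, not_and, exists_prop, mem_filter]
    rw [mem_finsuppAntidiag]
    dsimp only [ne_eq, smul_eq_mul, id_eq, eq_mpr_eq_cast, le_eq_subset, Finsupp.coe_mk]
    simp only [mem_univ, forall_true_left, not_and, not_forall, exists_prop,
      mem_filter, true_and] at ha
    refine ⟨⟨?_, fun i ↦ ?_⟩, fun i _ ↦ ⟨a.parts.count i, ha.1 i, rfl⟩⟩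
    · conv_rhs => simp [← a.parts_sum]
      rw [sum_multiset_count_of_subset _ s]
      · simp only [smul_eq_mul]
      · intro i
        simp only [Multiset.mem_toFinset, not_not, mem_filter]
        apply ha.2
    · simp only [ne_eq, Multiset.mem_toFinset, not_not, mem_filter, and_imp]
      exact fun hi _ ↦ ha.2 i hi
  · intro p₁ hp₁ p₂ hp₂ h
    apply Nat.Partition.ext
    simp only [true_and, mem_univ, mem_filter] at hp₁ hp₂
    ext i
    simp only [φ, ne_eq, Multiset.mem_toFinset, not_not, smul_eq_mul, Finsupp.mk.injEq] at h
    by_cases hi : i = 0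
    · rw [hi]
      rw [Multiset.count_eq_zero_of_notMem]
      · rw [Multiset.count_eq_zero_of_notMem]
        intro a; exact Nat.lt_irrefl 0 (hs 0 (hp₂.2 0 a))
      intro a; exact Nat.lt_irrefl 0 (hs 0 (hp₁.2 0 a))
    · rw [← mul_left_inj' hi]
      rw [funext_iff] at h
      exact h.2 i
  · simp only [φ, mem_filter, mem_finsuppAntidiag, mem_univ, exists_prop, true_and, and_assoc]
    rintro f ⟨hf, hf₃, hf₄⟩
    have hf' : f ∈ finsuppAntidiag s n := mem_finsuppAntidiag.mpr ⟨hf, hf₃⟩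
    simp only [mem_finsuppAntidiag] at hf'
    refine ⟨⟨∑ i ∈ s, Multiset.replicate (f i / i) i, ?_, ?_⟩, ?_, ?_, ?_⟩
    · intro i hi
      simp only [exists_prop, Multiset.mem_sum, mem_map, Function.Embedding.coeFn_mk] at hi
      rcases hi with ⟨t, ht, z⟩
      apply hs
      rwa [Multiset.eq_of_mem_replicate z]
    · simp_rw [Multiset.sum_sum, Multiset.sum_replicate, Nat.nsmul_eq_mul]
      rw [← hf'.1]
      refine sum_congr rfl fun i hi => Nat.div_mul_cancel ?_
      rcases hf₄ i hi with ⟨w, _, hw₂⟩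
      rw [← hw₂]
      exact dvd_mul_left _ _
    · intro i
      simp_rw [Multiset.count_sum', Multiset.count_replicate, sum_ite_eq']
      split_ifs with h
      · rcases hf₄ i h with ⟨w, hw₁, hw₂⟩
        rwa [← hw₂, Nat.mul_div_cancel _ (hs i h)]
      · exact hc _ h
    · intro i hi
      rw [Multiset.mem_sum] at hi
      rcases hi with ⟨j, hj₁, hj₂⟩
      rwa [Multiset.eq_of_mem_replicate hj₂]
    · ext i
      simp_rw [Multiset.count_sum', Multiset.count_replicate, sum_ite_eq']
      simp only [ne_eq, Multiset.mem_toFinset, not_not, smul_eq_mul, ite_mul,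
        zero_mul, Finsupp.coe_mk]
      split_ifs with h
      · apply Nat.div_mul_cancel
        rcases hf₄ i h with ⟨w, _, hw₂⟩
        apply Dvd.intro_left _ hw₂
      · apply symm
        rw [← Finsupp.notMem_support_iff]
        exact notMem_mono hf'.2 h

end

end FrAux


section FrMain

noncomputable section

open Finset PowerSeries
open scoped Classical

theorem prod_range_mul_reindex {M : Type*} [CommMonoid M] (f : ℕ → M) (L N : ℕ) :
    ∏ m ∈ range N, ∏ j ∈ range L, f (L * m + j) = ∏ k ∈ range (L * N), f k := by
  induction N with
  | zero => simp
  | succ N ih =>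
    rw [prod_range_succ, ih, Nat.mul_succ,
      ← Finset.prod_range_mul_prod_Ico f (Nat.le_add_right _ _)]
    congr 1
    rw [Finset.prod_Ico_eq_prod_range, Nat.add_sub_cancel_left]

theorem exists_T (n : ℕ) (s : Finset ℕ) (hs : ∀ k ∈ s, n < k) :
    ∃ g : PowerSeries ℚ, (∏ k ∈ s, (1 + X ^ (k + 1))) = 1 + X ^ (n + 1) * g := by
  classical
  induction s using Finset.induction with
  | empty => exact ⟨0, by simp⟩
  | @insert a t ha ih =>
    obtain ⟨g, hg⟩ := ih fun k hk => hs k (Finset.mem_insert_of_mem hk)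
    have han : n < a := hs a (Finset.mem_insert_self a t)
    refine ⟨X ^ (a - n) * (1 + X ^ (n + 1) * g) + g, ?_⟩
    rw [Finset.prod_insert ha, hg]
    have : (X : PowerSeries ℚ) ^ (a + 1) = X ^ (n + 1) * X ^ (a - n) := by
      rw [← pow_add]; congr 1; omega
    rw [this]; ring

theorem coeff_mul_one_add (n : ℕ) (A g : PowerSeries ℚ) :
    coeff (R := ℚ) n (A * (1 + X ^ (n + 1) * g)) = coeff (R := ℚ) n A := by
  rw [mul_add, mul_one, map_add,
    show A * (X ^ (n+1) * g) = X^(n+1) * (A*g) by ring, coeff_mul]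
  rw [Finset.sum_eq_zero, add_zero]
  rintro ⟨i, j⟩ hij
  rw [Finset.HasAntidiagonal.mem_antidiagonal] at hij
  rw [coeff_X_pow, if_neg (by omega), zero_mul]

theorem const_one_sub (k : ℕ) (hk : 0 < k) :
    PowerSeries.constantCoeff (R := ℚ) (1 - X ^ k) ≠ 0 := by
  simp [zero_pow hk.ne']

theorem conj1_gen (L n : ℕ) (hL : 0 < L) :
    PowerSeries.coeff (R := ℚ) n
      (∏ m ∈ Finset.range (n + 1),
        (1 + PowerSeries.X ^ (m + 1)) *
          (1 - PowerSeries.X ^ (L * 2 * (m + 1)) : PowerSeries ℚ)⁻¹)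
    = PowerSeries.coeff (R := ℚ) n
      (∏ m ∈ Finset.range (n + 1),
        (1 - PowerSeries.X ^ (L * (m + 1)) : PowerSeries ℚ)⁻¹
          * ∏ l ∈ Finset.range (L - 1),
              (1 + PowerSeries.X ^ (L * (m + 1) + (l + 1) - L) : PowerSeries ℚ)) := by
  set N := n + 1 with hN
  set A : PowerSeries ℚ := ∏ m ∈ range N, (1 + X ^ (m + 1)) * (1 - X ^ (L * 2 * (m + 1)))⁻¹
    with hA
  set B : PowerSeries ℚ := ∏ m ∈ range N,
      (1 - X ^ (L * (m + 1)))⁻¹ * ∏ l ∈ range (L - 1), (1 + X ^ (L * (m + 1) + (l + 1) - L))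
    with hB
  set QA : PowerSeries ℚ := ∏ m ∈ range N, (1 - X ^ (L * 2 * (m + 1))) with hQA
  set QB : PowerSeries ℚ := ∏ m ∈ range N, (1 - X ^ (L * (m + 1))) with hQB
  set RB : PowerSeries ℚ := ∏ m ∈ range N, (1 + X ^ (L * (m + 1))) with hRB
  set PA : PowerSeries ℚ := ∏ m ∈ range N, (1 + X ^ (m + 1)) with hPA
  set PB : PowerSeries ℚ := ∏ m ∈ range N,
      ∏ l ∈ range (L - 1), (1 + X ^ (L * m + l + 1)) with hPB
  set T : PowerSeries ℚ := ∏ k ∈ Ico N (L * N), (1 + X ^ (k + 1)) with hT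
  have hexp : ∀ m l : ℕ, L * (m + 1) + (l + 1) - L = L * m + l + 1 := by
    intro m l
    have : L * (m + 1) = L * m + L := by ring
    omega
  have hAQA : A * QA = PA := by
    rw [hA, hQA, hPA, ← prod_mul_distrib]
    refine prod_congr rfl fun m _ => ?_
    rw [mul_assoc, PowerSeries.inv_mul_cancel _ (const_one_sub _ (by positivity)), mul_one]
  have hBQB : B * QB = PB := by
    rw [hB, hQB, hPB, ← prod_mul_distrib]
    refine prod_congr rfl fun m _ => ?_
    rw [mul_comm, ← mul_assoc, PowerSeries.mul_inv_cancel _ (const_one_sub _ (by positivity)),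
      one_mul]
    exact prod_congr rfl fun l _ => by rw [hexp]
  have hQAQB : QA = QB * RB := by
    rw [hQA, hQB, hRB, ← prod_mul_distrib]
    refine prod_congr rfl fun m _ => ?_
    have : (X : PowerSeries ℚ) ^ (L * 2 * (m + 1)) = X ^ (L * (m+1)) * X ^ (L * (m+1)) := by
      rw [← pow_add]; congr 1; ring
    rw [this]; ring
  have hPBRB : PB * RB = ∏ k ∈ range (L * N), (1 + X ^ (k + 1)) := by
    rw [hPB, hRB, ← prod_mul_distrib, ← prod_range_mul_reindex (fun k => 1 + X ^ (k + 1)) L N]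
    refine prod_congr rfl fun m _ => ?_
    have h1 : L * m + (L - 1) + 1 = L * (m + 1) := by
      have : L * (m + 1) = L * m + L := by ring
      omega
    conv_rhs => rw [show L = (L - 1) + 1 by omega, prod_range_succ]
    rw [Nat.sub_add_cancel hL, h1]
  have hPAT : PA * T = ∏ k ∈ range (L * N), (1 + X ^ (k + 1)) := by
    rw [hPA, hT]
    exact Finset.prod_range_mul_prod_Ico _ (Nat.le_mul_of_pos_left _ hL)
  have hne : QB * RB ≠ 0 := by
    intro h0
    have h1 : PowerSeries.constantCoeff (R := ℚ) (QB * RB) = 1 := by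
      rw [hQB, hRB, map_mul, map_prod, map_prod]
      simp [zero_pow, Nat.mul_pos hL (Nat.succ_pos _) |>.ne']
    rw [h0, map_zero] at h1
    exact zero_ne_one h1
  have key : B * (QB * RB) = (A * T) * (QB * RB) := by
    calc B * (QB * RB) = (B * QB) * RB := by ring
    _ = PA * T := by rw [hBQB, hPBRB, hPAT]
    _ = (A * QA) * T := by rw [hAQA]
    _ = (A * T) * (QB * RB) := by rw [hQAQB]; ring
  have hBA : B = A * T := mul_right_cancel₀ hne key
  obtain ⟨g, hg⟩ := exists_T n (Ico N (L * N)) (fun k hk => by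
    rw [Finset.mem_Ico] at hk; omega)
  rw [hBA, hT, hg, coeff_mul_one_add]


theorem num_series'' (i : ℕ) (hi : 0 < i) :
    (1 - (X : PowerSeries ℚ) ^ i)⁻¹ = FrAux.indicatorSeries ℚ {k | i ∣ k} := by
  obtain ⟨j, rfl⟩ : ∃ j, i = j + 1 := ⟨i - 1, by omega⟩
  exact FrAux.num_series' j

theorem two_series' (i : ℕ) (hi : 0 < i) :
    1 + (X : PowerSeries ℚ) ^ i = FrAux.indicatorSeries ℚ {0, i} := by
  obtain ⟨j, rfl⟩ : ∃ j, i = j + 1 := ⟨i - 1, by omega⟩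
  exact FrAux.two_series j

open scoped Classical in
theorem conj2_gen (L n : ℕ) (hL : 0 < L) :
    PowerSeries.coeff (R := ℚ) n
      (∏ m ∈ Finset.range (n + 1),
        (1 - PowerSeries.X ^ (L * (m + 1)) : PowerSeries ℚ)⁻¹
          * ∏ l ∈ Finset.range (L - 1),
              (1 + PowerSeries.X ^ (L * (m + 1) + (l + 1) - L) : PowerSeries ℚ))
      = Nat.card {p : Nat.Partition n // ∀ i, ¬ (L ∣ i) → p.parts.count i ≤ 1} := by
  have hexp : ∀ m l : ℕ, L * (m + 1) + (l + 1) - L = L * m + l + 1 := by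
    intro m l
    have : L * (m + 1) = L * m + L := by ring
    omega
  set s₁ : Finset ℕ := (range (n + 1)).image (fun m => L * (m + 1)) with hs₁
  set s₂ : Finset ℕ :=
    ((range (n + 1)) ×ˢ (range (L - 1))).image (fun q => L * q.1 + q.2 + 1) with hs₂
  set s : Finset ℕ := s₁ ∪ s₂ with hs_def
  set c : ℕ → Set ℕ := fun i => if L ∣ i then Set.univ else {0, 1} with hc_def
  have hmem1 : ∀ i ∈ s₁, L ∣ i ∧ 0 < i := by
    intro i hi
    rw [hs₁, mem_image] at hi
    obtain ⟨m, -, rfl⟩ := hi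
    exact ⟨dvd_mul_right _ _, by positivity⟩
  have hmem2 : ∀ i ∈ s₂, ¬ L ∣ i ∧ 0 < i := by
    intro i hi
    rw [hs₂, mem_image] at hi
    obtain ⟨⟨m, l⟩, hq, rfl⟩ := hi
    rw [mem_product, mem_range, mem_range] at hq
    refine ⟨fun hdvd => ?_, by positivity⟩
    have h1 : L ∣ l + 1 := by
      have := (Nat.dvd_add_right (Dvd.intro m rfl)).mp (by rwa [add_assoc] at hdvd)
      exact this
    have := Nat.le_of_dvd (Nat.succ_pos l) h1
    omega
  have hdisj : Disjoint s₁ s₂ := by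
    rw [Finset.disjoint_left]
    intro i h1 h2
    exact (hmem2 i h2).1 (hmem1 i h1).1
  have hs : ∀ i ∈ s, 0 < i := by
    intro i hi
    rcases Finset.mem_union.mp hi with h | h
    exacts [(hmem1 i h).2, (hmem2 i h).2]
  have hc : ∀ i, i ∉ s → 0 ∈ c i := by
    intro i _
    simp only [hc_def]
    split_ifs
    · trivial
    · exact Or.inl rfl
  -- the product over s equals B
  have hprod : (∏ i ∈ s, FrAux.indicatorSeries ℚ ((· * i) '' c i)) =
      ∏ m ∈ Finset.range (n + 1),
        (1 - PowerSeries.X ^ (L * (m + 1)) : PowerSeries ℚ)⁻¹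
          * ∏ l ∈ Finset.range (L - 1),
              (1 + PowerSeries.X ^ (L * (m + 1) + (l + 1) - L) : PowerSeries ℚ) := by
    rw [hs_def, Finset.prod_union hdisj, Finset.prod_mul_distrib]
    congr 1
    · rw [hs₁, Finset.prod_image]
      · refine Finset.prod_congr rfl fun m _ => ?_
        have hdvd : L ∣ L * (m + 1) := dvd_mul_right _ _
        rw [hc_def]
        simp only [if_pos hdvd]
        rw [num_series'' _ (by positivity)]
        have himg : ((· * (L * (m + 1))) '' Set.univ) = {k | L * (m + 1) ∣ k} := by
          ext k
          simp only [Set.image_univ, Set.mem_range, Set.mem_setOf_eq]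
          constructor
          · rintro ⟨a, rfl⟩; exact Dvd.intro_left a rfl
          · rintro ⟨w, rfl⟩; exact ⟨w, mul_comm _ _⟩
        rw [himg]
      · intro a _ b _ h
        have := Nat.eq_of_mul_eq_mul_left hL h
        omega
    · rw [hs₂, Finset.prod_image, Finset.prod_product]
      · exact Finset.prod_congr rfl fun m _ => Finset.prod_congr rfl fun l hl => by
          rw [hexp, hc_def]
          have hnd : ¬ L ∣ L * m + l + 1 := by
            refine fun hdvd => ?_
            have h1 : L ∣ l + 1 :=
              (Nat.dvd_add_right (Dvd.intro m rfl)).mp (by rwa [add_assoc] at hdvd)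
            have := Nat.le_of_dvd (Nat.succ_pos l) h1
            rw [mem_range] at hl
            omega
          simp only [if_neg hnd]
          rw [two_series' _ (by positivity)]
          have himg2 : ((· * (L * m + l + 1)) '' {0, 1}) = {0, L * m + l + 1} := by
            rw [Set.image_pair]
            norm_num
          rw [himg2]
      · rintro ⟨a1, a2⟩ ha ⟨b1, b2⟩ hb h
        simp only [mem_coe, mem_product, mem_range] at ha hb
        simp only at h
        have h1 : a1 = b1 := by
          have e1 : (L * a1 + a2 + 1) / L = a1 := by
            rw [add_assoc, Nat.mul_add_div hL, Nat.div_eq_of_lt (by omega), add_zero]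
          have e2 : (L * b1 + b2 + 1) / L = b1 := by
            rw [add_assoc, Nat.mul_add_div hL, Nat.div_eq_of_lt (by omega), add_zero]
          rw [← e1, ← e2, h]
        subst h1
        have h2 : a2 = b2 := by omega
        exact Prod.ext rfl h2
  -- all sizes 1..n are in s
  have hall : ∀ j, 0 < j → j ≤ n → j ∈ s := by
    intro j hj hjn
    rw [hs_def, Finset.mem_union]
    by_cases hdvd : L ∣ j
    · left
      obtain ⟨q, rfl⟩ := hdvd
      have hq : 0 < q := Nat.pos_of_ne_zero fun h => by subst h; simp at hj
      rw [hs₁, mem_image]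
      have h2 : q ≤ L * q := Nat.le_mul_of_pos_left q hL
      exact ⟨q - 1, by rw [mem_range]; omega, by congr 1; omega⟩
    · right
      rw [hs₂, mem_image]
      have hmod : j % L ≠ 0 := fun h => hdvd (Nat.dvd_of_mod_eq_zero h)
      have hmodlt : j % L < L := Nat.mod_lt _ hL
      refine ⟨(j / L, j % L - 1), ?_, ?_⟩
      · rw [mem_product, mem_range, mem_range]
        exact ⟨lt_of_le_of_lt (le_trans (Nat.div_le_self _ _) hjn) (Nat.lt_succ_self n),
          by omega⟩
      · simp only
        have := Nat.div_add_mod j L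
        omega
  -- counting
  have hcount := FrAux.partialGF_prop ℚ n s hs c hc
  rw [hprod] at hcount
  rw [← hcount]
  norm_cast
  rw [Nat.card_eq_fintype_card, Fintype.card_subtype]
  apply congrArg Finset.card
  apply Finset.filter_congr
  intro p _
  constructor
  · rintro ⟨h1, -⟩ i hi
    have := h1 i
    simp only [hc_def, if_neg hi, Set.mem_insert_iff, Set.mem_singleton_iff] at this
    omega
  · intro hp
    constructor
    · intro j
      simp only [hc_def]
      split_ifs with hdvd
      · trivial
      · have := hp j hdvd
        rcases Nat.le_one_iff_eq_zero_or_eq_one.mp this with h | h <;> simp [h]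
    · intro j hj
      refine hall j (p.parts_pos hj) ?_
      have := Multiset.single_le_sum (fun _ _ => Nat.zero_le _) _ hj
      -- sum of parts is n
      calc j ≤ p.parts.sum := this
        _ = n := p.parts_sum

end

end FrMain

/-- For every `r ≥ 1`,
`∏_{m≥1} (1+x^m)/(1-x^{2^r m})
  = ∏_{m≥1} [(1-x^{2^{r-1}m})⁻¹ ∏_{λ=1}^{2^{r-1}-1} (1+x^{2^{r-1}m+λ-2^{r-1}})]`,
stated coefficientwise with truncated products; equivalently, `f_r(x)` is the generating
function for partitions in which parts not divisible by `2^{r-1}` are distinct. -/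
theorem fr_distinct_parts_form (r : ℕ) (hr : 1 ≤ r) (n : ℕ) :
    ((PowerSeries.coeff (R := ℚ) n)
      (∏ m ∈ Finset.range (n + 1),
        (1 + PowerSeries.X ^ (m + 1)) * (1 - PowerSeries.X ^ (2 ^ r * (m + 1)) : PowerSeries ℚ)⁻¹)
    = (PowerSeries.coeff (R := ℚ) n)
      (∏ m ∈ Finset.range (n + 1),
        (1 - PowerSeries.X ^ (2 ^ (r - 1) * (m + 1)) : PowerSeries ℚ)⁻¹
          * ∏ l ∈ Finset.range (2 ^ (r - 1) - 1),
              (1 + PowerSeries.X ^ (2 ^ (r - 1) * (m + 1) + (l + 1) - 2 ^ (r - 1)) : PowerSeries ℚ)))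
    ∧ (PowerSeries.coeff (R := ℚ) n)
      (∏ m ∈ Finset.range (n + 1),
        (1 + PowerSeries.X ^ (m + 1)) * (1 - PowerSeries.X ^ (2 ^ r * (m + 1)) : PowerSeries ℚ)⁻¹)
      = Nat.card {p : Nat.Partition n // ∀ i, ¬ (2 ^ (r - 1) ∣ i) → p.parts.count i ≤ 1} := by
  have hL : 0 < 2 ^ (r - 1) := pow_pos two_pos _
  have h2r : 2 ^ r = 2 ^ (r - 1) * 2 := by
    rw [← pow_succ, Nat.sub_add_cancel hr]
  constructor
  · rw [h2r]
    exact conj1_gen (2 ^ (r - 1)) n hL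
  · rw [h2r, conj1_gen (2 ^ (r - 1)) n hL]
    exact conj2_gen (2 ^ (r - 1)) n hL
end

section
/- For any two distinct Farey fractions h₁/k₁ and h₂/k₂ in lowest terms, the Ford circles C(h₁,k₁) and C(h₂,k₂) are either tangent or disjoint; equivalently, the distance between their centers is at least the sum of their radii, with equality iff |h₁k₂ - h₂k₁| = 1. -/
/-- Ford circles of distinct reduced fractions are tangent or disjoint: the distance
between their centers is at least the sum of their radii, with equality iff
`|h₁k₂ - h₂k₁| = 1`. -/
theorem ford_circles_tangent_or_disjoint
    (h₁ k₁ h₂ k₂ : ℤ) (hk₁ : 0 < k₁) (hk₂ : 0 < k₂)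
    (hc₁ : Int.gcd h₁ k₁ = 1) (hc₂ : Int.gcd h₂ k₂ = 1)
    (hne : h₁ * k₂ ≠ h₂ * k₁) :
    ‖(((h₁ : ℂ) / k₁ + Complex.I / (2 * (k₁ : ℂ) ^ 2))
          - ((h₂ : ℂ) / k₂ + Complex.I / (2 * (k₂ : ℂ) ^ 2)))‖
      ≥ 1 / (2 * (k₁ : ℝ) ^ 2) + 1 / (2 * (k₂ : ℝ) ^ 2)
    ∧ (‖(((h₁ : ℂ) / k₁ + Complex.I / (2 * (k₁ : ℂ) ^ 2))
          - ((h₂ : ℂ) / k₂ + Complex.I / (2 * (k₂ : ℂ) ^ 2)))‖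
      = 1 / (2 * (k₁ : ℝ) ^ 2) + 1 / (2 * (k₂ : ℝ) ^ 2)
      ↔ (h₁ * k₂ - h₂ * k₁).natAbs = 1) := by
  have hk₁' : (k₁ : ℝ) ≠ 0 := Int.cast_ne_zero.mpr hk₁.ne'
  have hk₂' : (k₂ : ℝ) ≠ 0 := Int.cast_ne_zero.mpr hk₂.ne'
  set d : ℤ := h₁ * k₂ - h₂ * k₁ with hd
  have hd0 : d ≠ 0 := sub_ne_zero.mpr hne
  have hd1 : (1 : ℤ) ≤ d ^ 2 := by
    have : 1 ≤ |d| := Int.one_le_abs hd0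
    nlinarith [abs_nonneg d, sq_abs d]
  set z : ℂ := ((h₁ : ℂ) / k₁ + Complex.I / (2 * (k₁ : ℂ) ^ 2))
          - ((h₂ : ℂ) / k₂ + Complex.I / (2 * (k₂ : ℂ) ^ 2)) with hz
  set R : ℝ := 1 / (2 * (k₁ : ℝ) ^ 2) + 1 / (2 * (k₂ : ℝ) ^ 2) with hR
  have hRpos : 0 < R := by positivity
  have hz2 : z = (((h₁ : ℝ) / k₁ - (h₂ : ℝ) / k₂ : ℝ) : ℂ)
      + ((1 / (2 * (k₁ : ℝ) ^ 2) - 1 / (2 * (k₂ : ℝ) ^ 2) : ℝ) : ℂ) * Complex.I := by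
    have hk₁c : (k₁ : ℂ) ≠ 0 := Int.cast_ne_zero.mpr hk₁.ne'
    have hk₂c : (k₂ : ℂ) ≠ 0 := Int.cast_ne_zero.mpr hk₂.ne'
    rw [hz]; push_cast; field_simp [hk₁c, hk₂c]; ring
  have hsq : ‖z‖ ^ 2 = R ^ 2 + ((d : ℝ) ^ 2 - 1) / ((k₁ : ℝ) ^ 2 * (k₂ : ℝ) ^ 2) := by
    rw [hz2, Complex.sq_norm, Complex.normSq_add_mul_I, hR]
    have : ((d : ℝ)) = h₁ * k₂ - h₂ * k₁ := by push_cast [hd]; ring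
    field_simp [this]
    rw [this]; ring
  have hd1' : (1 : ℝ) ≤ (d : ℝ) ^ 2 := by exact_mod_cast hd1
  have habs : 0 ≤ ‖z‖ := norm_nonneg z
  have hk : (0:ℝ) < (k₁ : ℝ) ^ 2 * (k₂ : ℝ) ^ 2 := by positivity
  have hcnn : 0 ≤ ((d : ℝ) ^ 2 - 1) / ((k₁ : ℝ) ^ 2 * (k₂ : ℝ) ^ 2) :=
    div_nonneg (by linarith) hk.le
  have hge : ‖z‖ ≥ R := by
    have h2 : R ^ 2 ≤ ‖z‖ ^ 2 := by rw [hsq]; linarith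
    calc R = Real.sqrt (R ^ 2) := (Real.sqrt_sq hRpos.le).symm
      _ ≤ Real.sqrt (‖z‖ ^ 2) := Real.sqrt_le_sqrt h2
      _ = ‖z‖ := Real.sqrt_sq habs
  refine ⟨hge, ?_, ?_⟩
  · intro heq
    have hc0 : ((d : ℝ) ^ 2 - 1) / ((k₁ : ℝ) ^ 2 * (k₂ : ℝ) ^ 2) = 0 := by
      rw [heq] at hsq; linarith
    have : (d : ℝ) ^ 2 = 1 := by
      have := (div_eq_zero_iff.mp hc0).resolve_right hk.ne'
      linarith
    have hdint : d * d = 1 := by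
      have : (d : ℝ) * d = 1 := by nlinarith
      exact_mod_cast this
    rcases Int.isUnit_iff.mp (IsUnit.of_mul_eq_one d hdint) with h | h <;> simp [h]
  · intro h
    have hd2 : (d : ℝ) ^ 2 = 1 := by
      rcases Int.natAbs_eq_iff.mp h with h | h <;> rw [h] <;> norm_num
    have : ‖z‖ ^ 2 = R ^ 2 := by rw [hsq, hd2]; simp
    calc ‖z‖ = Real.sqrt (‖z‖ ^ 2) := (Real.sqrt_sq habs).symm
      _ = Real.sqrt (R ^ 2) := by rw [this]
      _ = R := Real.sqrt_sq hRpos.le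
end

section
/- If h/k and h'/k' are consecutive fractions in the Farey sequence of order N (with k, k' ≤ N, fractions in lowest terms), then the Ford circles C(h,k) and C(h',k') are tangent, and the point of tangency is h/k + k'/(k(k²+k'²)) + i/(k²+k'²). -/
lemma farey_unimodular
    (N : ℕ) (h k h' k' : ℤ) (hk : 0 < k) (hkN : k ≤ N) (hk' : 0 < k') (hk'N : k' ≤ N)
    (hc : Int.gcd h k = 1) (hc' : Int.gcd h' k' = 1)
    (hlt : (h : ℚ) / k < (h' : ℚ) / k')
    (hconsec : ∀ a b : ℤ, 0 < b → b ≤ N → Int.gcd a b = 1 →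
      ¬ ((h : ℚ) / k < (a : ℚ) / b ∧ (a : ℚ) / b < (h' : ℚ) / k')) :
    h' * k - h * k' = 1 := by
  have hkQ : (0:ℚ) < (k:ℚ) := by exact_mod_cast hk
  have hk'Q : (0:ℚ) < (k':ℚ) := by exact_mod_cast hk'
  obtain ⟨u, v, huv⟩ : IsCoprime h k := Int.isCoprime_iff_gcd_eq_one.mpr hc
  -- k * x₀ - h * y₀ = 1 with x₀ = v, y₀ = -u
  set y₀ : ℤ := -u with hy₀
  set x₀ : ℤ := v with hx₀
  have key : k * x₀ - h * y₀ = 1 := by simp only [hy₀, hx₀]; linarith [huv]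
  set r : ℤ := (N - y₀) % k with hr
  have hr0 : 0 ≤ r := Int.emod_nonneg _ (by omega)
  have hrk : r < k := Int.emod_lt_of_pos _ hk
  set t : ℤ := (N - y₀) / k with ht
  have hmod : r + k * t = N - y₀ := Int.emod_add_mul_ediv (N - y₀) k
  set y : ℤ := y₀ + k * t with hy
  set x : ℤ := x₀ + t * h with hx
  have hyval : y = N - r := by omega
  have hypos : 0 < y := by omega
  have hyN : y ≤ N := by omega
  have hkey : k * x - h * y = 1 := by
    simp only [hx, hy]; linear_combination key
  have hgcd : Int.gcd x y = 1 := by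
    rw [← Int.isCoprime_iff_gcd_eq_one]
    exact ⟨k, -h, by linarith⟩
  have hyQ : (0:ℚ) < (y:ℚ) := by exact_mod_cast hypos
  have hgt : (h:ℚ)/k < (x:ℚ)/y := by
    rw [div_lt_div_iff₀ hkQ hyQ]
    have : (k:ℚ) * x - h * y = 1 := by exact_mod_cast hkey
    linarith
  -- cross-multiplied positivity from hlt
  have hd1 : 1 ≤ h' * k - h * k' := by
    have := (div_lt_div_iff₀ hkQ hk'Q).mp hlt
    have : h * k' < h' * k := by exact_mod_cast this
    omega
  have hle : (x:ℚ)/y ≤ (h':ℚ)/k' := by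
    by_contra hcon
    push_neg at hcon
    have h2 : 1 ≤ x * k' - h' * y := by
      have := (div_lt_div_iff₀ hk'Q hyQ).mp hcon
      have : h' * y < x * k' := by exact_mod_cast this
      omega
    -- k' = (x*k' - h'*y)*k + (h'*k - h*k')*y
    have hid : k' = (x * k' - h' * y) * k + (h' * k - h * k') * y := by
      have : k' * (k * x - h * y) = k' := by rw [hkey]; ring
      linarith [this]
    nlinarith [hid, hypos, hk, h2, hd1, hkN, hk'N, hyN]
  have heq : (x:ℚ)/y = (h':ℚ)/k' := by
    rcases lt_or_eq_of_le hle with hl | he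
    · exact absurd ⟨hgt, hl⟩ (hconsec x y hypos hyN hgcd)
    · exact he
  have hcross : x * k' = h' * y := by
    have := (div_eq_div_iff hyQ.ne' hk'Q.ne').mp heq
    exact_mod_cast this
  -- y ∣ k' and k' ∣ y
  have hco_xy : IsCoprime x y := Int.isCoprime_iff_gcd_eq_one.mpr hgcd
  have hco_h'k' : IsCoprime h' k' := Int.isCoprime_iff_gcd_eq_one.mpr hc'
  have hyk' : y ∣ k' := by
    have : y ∣ x * k' := ⟨h', by linarith [hcross]⟩
    exact hco_xy.symm.dvd_of_dvd_mul_left this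
  have hk'y : k' ∣ y := by
    have : k' ∣ h' * y := ⟨x, by linarith [hcross]⟩
    exact hco_h'k'.symm.dvd_of_dvd_mul_left this
  have hyek' : y = k' := Int.dvd_antisymm (le_of_lt hypos) (le_of_lt hk') hyk' hk'y
  have hxe : x = h' := by
    have : x * k' = h' * k' := by rw [hcross, hyek']
    exact mul_right_cancel₀ (by omega) this
  rw [hxe, hyek'] at hkey
  linear_combination hkey

lemma abs_helper (a b rr : ℝ) (hr : 0 ≤ rr) (hab : a ^ 2 + b ^ 2 = rr ^ 2) :
    norm ((a : ℂ) + (b : ℂ) * Complex.I) = rr := by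
  rw [Complex.norm_def, Complex.normSq_add_mul_I, hab, Real.sqrt_sq hr]

/-- If `h/k` and `h'/k'` are consecutive fractions of the Farey sequence of order `N`,
then the Ford circles `C(h,k)` and `C(h',k')` are tangent, and the point of tangency is
`h/k + k'/(k(k²+k'²)) + i/(k²+k'²)`. -/
theorem ford_circles_of_consecutive_farey_tangent
    (N : ℕ) (h k h' k' : ℤ) (hk : 0 < k) (hkN : k ≤ N) (hk' : 0 < k') (hk'N : k' ≤ N)
    (hc : Int.gcd h k = 1) (hc' : Int.gcd h' k' = 1)
    (h0 : 0 ≤ (h : ℚ) / k) (h1 : (h' : ℚ) / k' < 1)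
    (hlt : (h : ℚ) / k < (h' : ℚ) / k')
    (hconsec : ∀ a b : ℤ, 0 < b → b ≤ N → Int.gcd a b = 1 →
      ¬ ((h : ℚ) / k < (a : ℚ) / b ∧ (a : ℚ) / b < (h' : ℚ) / k')) :
    norm
        (((h : ℂ) / k + Complex.I / (2 * (k : ℂ) ^ 2))
          - ((h' : ℂ) / k' + Complex.I / (2 * (k' : ℂ) ^ 2)))
      = 1 / (2 * (k : ℝ) ^ 2) + 1 / (2 * (k' : ℝ) ^ 2)
    ∧ norm
        (((h : ℂ) / k + (k' : ℂ) / (k * ((k : ℂ) ^ 2 + (k' : ℂ) ^ 2))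
            + Complex.I / ((k : ℂ) ^ 2 + (k' : ℂ) ^ 2))
          - ((h : ℂ) / k + Complex.I / (2 * (k : ℂ) ^ 2)))
      = 1 / (2 * (k : ℝ) ^ 2)
    ∧ norm
        (((h : ℂ) / k + (k' : ℂ) / (k * ((k : ℂ) ^ 2 + (k' : ℂ) ^ 2))
            + Complex.I / ((k : ℂ) ^ 2 + (k' : ℂ) ^ 2))
          - ((h' : ℂ) / k' + Complex.I / (2 * (k' : ℂ) ^ 2)))
      = 1 / (2 * (k' : ℝ) ^ 2) := by
  have unim : h' * k - h * k' = 1 :=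
    farey_unimodular N h k h' k' hk hkN hk' hk'N hc hc' hlt hconsec
  have hkR : (0:ℝ) < (k:ℝ) := by exact_mod_cast hk
  have hk'R : (0:ℝ) < (k':ℝ) := by exact_mod_cast hk'
  have hkR0 : (k:ℝ) ≠ 0 := ne_of_gt hkR
  have hk'R0 : (k':ℝ) ≠ 0 := ne_of_gt hk'R
  have hsR : (k:ℝ)^2 + (k':ℝ)^2 ≠ 0 := by positivity
  have hkC : (k:ℂ) ≠ 0 := by exact_mod_cast (show (k:ℤ) ≠ 0 by omega)
  have hk'C : (k':ℂ) ≠ 0 := by exact_mod_cast (show (k':ℤ) ≠ 0 by omega)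
  have hsC : (k:ℂ)^2 + (k':ℂ)^2 ≠ 0 := by
    have : ((k:ℝ)^2 + (k':ℝ)^2 : ℂ) ≠ 0 := by exact_mod_cast hsR
    push_cast at this; exact this
  have unimC : (h':ℂ) * k - h * k' = 1 := by exact_mod_cast unim
  have keyC : (h':ℂ)/k' = (h:ℂ)/k + 1/(k*k') := by
    field_simp
    linear_combination unimC
  refine ⟨?_, ?_, ?_⟩
  · have hrw : ((h : ℂ) / k + Complex.I / (2 * (k : ℂ) ^ 2))
          - ((h' : ℂ) / k' + Complex.I / (2 * (k' : ℂ) ^ 2))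
        = ((-(1/((k:ℝ)*(k':ℝ))) : ℝ) : ℂ)
          + ((1/(2*(k:ℝ)^2) - 1/(2*(k':ℝ)^2) : ℝ) : ℂ) * Complex.I := by
      rw [keyC]; push_cast; ring
    rw [hrw]
    apply abs_helper
    · positivity
    · field_simp; ring
  · have hrw : ((h : ℂ) / k + (k' : ℂ) / (k * ((k : ℂ) ^ 2 + (k' : ℂ) ^ 2))
            + Complex.I / ((k : ℂ) ^ 2 + (k' : ℂ) ^ 2))
          - ((h : ℂ) / k + Complex.I / (2 * (k : ℂ) ^ 2))
        = (((k':ℝ)/((k:ℝ)*((k:ℝ)^2+(k':ℝ)^2)) : ℝ) : ℂ)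
          + ((1/((k:ℝ)^2+(k':ℝ)^2) - 1/(2*(k:ℝ)^2) : ℝ) : ℂ) * Complex.I := by
      push_cast; ring
    rw [hrw]
    apply abs_helper
    · positivity
    · field_simp; ring
  · have hrw : ((h : ℂ) / k + (k' : ℂ) / (k * ((k : ℂ) ^ 2 + (k' : ℂ) ^ 2))
            + Complex.I / ((k : ℂ) ^ 2 + (k' : ℂ) ^ 2))
          - ((h' : ℂ) / k' + Complex.I / (2 * (k' : ℂ) ^ 2))
        = ((-((k:ℝ)/((k':ℝ)*((k:ℝ)^2+(k':ℝ)^2))) : ℝ) : ℂ)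
          + ((1/((k:ℝ)^2+(k':ℝ)^2) - 1/(2*(k':ℝ)^2) : ℝ) : ℂ) * Complex.I := by
      have e1 : (k':ℂ)/(k*((k:ℂ)^2+(k':ℂ)^2)) - 1/(k*k') = -((k:ℂ)/(k'*((k:ℂ)^2+(k':ℂ)^2))) := by
        field_simp
        ring
      rw [keyC]; push_cast
      linear_combination e1
    rw [hrw]
    apply abs_helper
    · positivity
    · field_simp; ring
end
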